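/- Let q, p ∈ ℝ³ with q ≠ 0 and q × p = 0. Then the 3×6 real matrix with rows (0, −p₃, p₂, 0, −q₃, q₂), (p₃, 0, −p₁, q₃, 0, −q₁), (−p₂, p₁, 0, −q₂, q₁, 0) has rank exactly 2. In particular 0 is not a regular value of the momentum map of the three-dimensional rotationally invariant GUP theory, but the rank of its differential is constant on the zero level set. -/
import Mathlib

open Matrix in
private lemma cons_val_five' {α : Type*} {m : ℕ} (x : α)
    (u : Fin (m + 5) → α) :
    vecCons x u 5 = vecHead (vecTail (vecTail (vecTail (vecTail u)))) :=
  rfl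

/-- For `q ≠ 0` with `q × p = 0`, the 3×6 matrix of the differential of the momentum map of
the three-dimensional rotationally invariant GUP theory has rank exactly 2 on the zero level
set: `0` is not a regular value, but the rank of the differential is constant there. -/
theorem stmt_10 (q p : Fin 3 → ℝ) (hq : q ≠ 0) (hqp : crossProduct q p = 0) :
    (!![0, -p 2, p 1, 0, -q 2, q 1;
        p 2, 0, -p 0, q 2, 0, -q 0;
        -p 1, p 0, 0, -q 1, q 0, 0] : Matrix (Fin 3) (Fin 6) ℝ).rank = 2 := by
  set M : Matrix (Fin 3) (Fin 6) ℝ :=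
    !![0, -p 2, p 1, 0, -q 2, q 1;
        p 2, 0, -p 0, q 2, 0, -q 0;
        -p 1, p 0, 0, -q 1, q 0, 0] with hM
  have h0 : q 1 * p 2 - q 2 * p 1 = 0 := by
    have := congrFun hqp 0; simpa [cross_apply] using this
  have h1 : q 2 * p 0 - q 0 * p 2 = 0 := by
    have := congrFun hqp 1; simpa [cross_apply] using this
  have h2 : q 0 * p 1 - q 1 * p 0 = 0 := by
    have := congrFun hqp 2; simpa [cross_apply] using this
  -- Upper bound: q is in the kernel of the transpose
  have hvec : M.vecMul q = 0 := by
    funext j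
    fin_cases j <;>
      simp [hM, Matrix.vecMul, dotProduct, Fin.sum_univ_three, cons_val_five'] <;>
      linarith
  have hker : q ∈ LinearMap.ker (M.transpose).mulVecLin := by
    simp only [LinearMap.mem_ker, Matrix.mulVecLin_apply, Matrix.mulVec_transpose]
    exact hvec
  have hkerpos : 1 ≤ Module.finrank ℝ (LinearMap.ker (M.transpose).mulVecLin) := by
    rw [Submodule.one_le_finrank_iff]
    intro hbot
    rw [hbot, Submodule.mem_bot] at hker
    exact hq hker
  have hupper : M.rank ≤ 2 := by
    rw [← Matrix.rank_transpose M]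
    have h := LinearMap.finrank_range_add_finrank_ker (M.transpose).mulVecLin
    simp only [Module.finrank_pi, Fintype.card_fin] at h
    have : Matrix.rank M.transpose
        = Module.finrank ℝ (LinearMap.range (M.transpose).mulVecLin) := rfl
    omega
  -- Lower bound: two linearly independent columns
  have key : ∀ u v : Fin 3 → ℝ, u ∈ LinearMap.range M.mulVecLin →
      v ∈ LinearMap.range M.mulVecLin → LinearIndependent ℝ ![u, v] → 2 ≤ M.rank := by
    intro u v hu hv hind
    set W := LinearMap.range M.mulVecLin with hW
    let f : Fin 2 → W := ![⟨u, hu⟩, ⟨v, hv⟩]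
    have hcomp : W.subtype ∘ f = ![u, v] := by
      funext i; fin_cases i <;> rfl
    have hindf : LinearIndependent ℝ f := by
      apply LinearIndependent.of_comp W.subtype
      rw [hcomp]; exact hind
    have := hindf.fintype_card_le_finrank
    simpa [Matrix.rank, ← hW] using this
  have hcol : ∀ j : Fin 6, (fun i => M i j) ∈ LinearMap.range M.mulVecLin := by
    intro j
    exact ⟨Pi.single j 1, by rw [Matrix.mulVecLin_apply, Matrix.mulVec_single_one]; rfl⟩
  have hlower : 2 ≤ M.rank := by
    rcases Function.ne_iff.mp hq with ⟨i, hi⟩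
    fin_cases i
    · -- q 0 ≠ 0 : columns 4 and 5
      replace hi : q 0 ≠ 0 := by simpa using hi
      refine key (fun i => M i 4) (fun i => M i 5) (hcol 4) (hcol 5) ?_
      rw [linearIndependent_fin2]
      constructor
      · intro h
        have h' : (0 : ℝ) = -q 0 := congrFun h.symm 1
        exact hi (by linarith)
      · intro a h
        have h1' : a * -q 0 = (0 : ℝ) := congrFun h 1
        have h2' : a * 0 = q 0 := congrFun h 2
        rcases mul_eq_zero.mp h1' with h1' | h1'
        · exact hi (by rw [h1'] at h2'; linarith)
        · exact hi (by linarith)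
    · -- q 1 ≠ 0 : columns 3 and 5
      replace hi : q 1 ≠ 0 := by simpa using hi
      refine key (fun i => M i 3) (fun i => M i 5) (hcol 3) (hcol 5) ?_
      rw [linearIndependent_fin2]
      constructor
      · intro h
        have h' : (0 : ℝ) = q 1 := congrFun h.symm 0
        exact hi h'.symm
      · intro a h
        have h0' : a * q 1 = (0 : ℝ) := congrFun h 0
        have h2' : a * 0 = -q 1 := congrFun h 2
        rcases mul_eq_zero.mp h0' with h0' | h0'
        · exact hi (by rw [h0'] at h2'; linarith)
        · exact hi h0'
    · -- q 2 ≠ 0 : columns 3 and 4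
      replace hi : q 2 ≠ 0 := by simpa using hi
      refine key (fun i => M i 3) (fun i => M i 4) (hcol 3) (hcol 4) ?_
      rw [linearIndependent_fin2]
      constructor
      · intro h
        have h' : (0 : ℝ) = -q 2 := congrFun h.symm 0
        exact hi (by linarith)
      · intro a h
        have h1' : a * 0 = q 2 := congrFun h 1
        exact hi (by linarith)
  omega
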